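/- The fidelity function ρ ↦ F(ρ, σ) on the density operators of ℂ^d is not strictly concave when σ is a boundary state: if σ has rank r < d, there exist distinct density operators ρ₁ ≠ ρ₂ with F((ρ₁+ρ₂)/2, σ) = (F(ρ₁,σ) + F(ρ₂,σ))/2. -/

import Mathlib

open scoped ComplexOrder
open Matrix

def IsDensity {d : ℕ} (ρ : Matrix (Fin d) (Fin d) ℂ) : Prop :=
  ρ.PosSemidef ∧ ρ.trace = 1

/-- The positive semidefinite square root (junk value `0` off the PSD cone). -/
noncomputable def matSqrt {d : ℕ} (A : Matrix (Fin d) (Fin d) ℂ) :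
    Matrix (Fin d) (Fin d) ℂ :=
  by classical exact if h : A.PosSemidef then
    ((h.1.eigenvectorUnitary : Matrix (Fin d) (Fin d) ℂ) *
      diagonal (fun i => ((Real.sqrt (h.1.eigenvalues i) : ℝ) : ℂ)) *
      (star (h.1.eigenvectorUnitary : Matrix (Fin d) (Fin d) ℂ))) else 0

/-- The fidelity `F(ρ,σ) = tr √(√σ ρ √σ)`. -/
noncomputable def fidelity {d : ℕ} (ρ σ : Matrix (Fin d) (Fin d) ℂ) : ℝ :=
  ((matSqrt (matSqrt σ * ρ * matSqrt σ)).trace).re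

section FidAux

variable {d : ℕ}

lemma vecMulVec_mulVec' (a b x : Fin d → ℂ) :
    vecMulVec a b *ᵥ x = (b ⬝ᵥ x) • a := by
  ext i
  simp only [vecMulVec_apply, mulVec, dotProduct, Pi.smul_apply, smul_eq_mul, Finset.sum_mul]
  exact Finset.sum_congr rfl fun j _ => by ring

lemma trace_vecMulVec' (a b : Fin d → ℂ) : (vecMulVec a b).trace = a ⬝ᵥ b := by
  simp [Matrix.trace, Matrix.diag, vecMulVec_apply, dotProduct]

lemma isHermitian_outer' (a : Fin d → ℂ) : (vecMulVec a (star a)).IsHermitian := by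
  ext i j
  simp [conjTranspose_apply, vecMulVec_apply, mul_comm]

lemma star_dotProduct_flip (a x : Fin d → ℂ) :
    star x ⬝ᵥ a = star (star a ⬝ᵥ x) := by
  simp [dotProduct, mul_comm]

lemma posSemidef_outer' (a : Fin d → ℂ) : (vecMulVec a (star a)).PosSemidef := by
  refine posSemidef_iff_dotProduct_mulVec.mpr ⟨isHermitian_outer' a, fun x => ?_⟩
  rw [vecMulVec_mulVec', dotProduct_smul, smul_eq_mul, star_dotProduct_flip,
    mul_comm]
  exact mul_star_self_nonneg _

lemma mul_vecMulVec' (s : Matrix (Fin d) (Fin d) ℂ) (a c : Fin d → ℂ) :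
    s * vecMulVec a c = vecMulVec (s *ᵥ a) c := by
  ext i j
  simp only [mul_apply, vecMulVec_apply, mulVec, dotProduct, Finset.sum_mul]
  exact Finset.sum_congr rfl fun k _ => by ring

lemma vecMulVec_mul' (a c : Fin d → ℂ) (s : Matrix (Fin d) (Fin d) ℂ) :
    vecMulVec a c * s = vecMulVec a (c ᵥ* s) := by
  ext i j
  simp only [mul_apply, vecMulVec_apply, vecMul, dotProduct, Finset.mul_sum]
  exact Finset.sum_congr rfl fun k _ => by ring

lemma posSemidef_real_smul' {A : Matrix (Fin d) (Fin d) ℂ} (hA : A.PosSemidef)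
    {c : ℝ} (hc : 0 ≤ c) : (c • A).PosSemidef := by
  refine posSemidef_iff_dotProduct_mulVec.mpr ⟨?_, fun x => ?_⟩
  · unfold Matrix.IsHermitian
    rw [conjTranspose_smul, hA.1]
    norm_num
  · rw [smul_mulVec, dotProduct_smul]
    rw [Complex.real_smul]
    exact mul_nonneg (Complex.zero_le_real.mpr hc) (hA.dotProduct_mulVec_nonneg x)

lemma smul_vecMulVec_smul (c : ℂ) (a b : Fin d → ℂ) :
    vecMulVec (c • a) (c • b) = (c * c) • vecMulVec a b := by
  ext i j
  simp [vecMulVec_apply]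
  ring

end FidAux

theorem stmt11 {d : ℕ} (σ : Matrix (Fin d) (Fin d) ℂ)
    (hσ : IsDensity σ) (hrank : σ.rank < d) :
    ∃ ρ₁ ρ₂ : Matrix (Fin d) (Fin d) ℂ, IsDensity ρ₁ ∧ IsDensity ρ₂ ∧ ρ₁ ≠ ρ₂ ∧
      fidelity ((1/2 : ℝ) • (ρ₁ + ρ₂)) σ = (fidelity ρ₁ σ + fidelity ρ₂ σ) / 2 := by
  classical
  obtain ⟨hps, htr⟩ := hσ
  have hH : σ.IsHermitian := hps.1
  set U : Matrix (Fin d) (Fin d) ℂ := (hH.eigenvectorUnitary : Matrix (Fin d) (Fin d) ℂ)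
    with hUdef
  have hUU : star U * U = 1 := mem_unitaryGroup_iff'.mp hH.eigenvectorUnitary.2
  set ev : Fin d → ℝ := hH.eigenvalues with hevdef
  -- orthonormality of columns of U
  have horth : ∀ a b : Fin d, star (fun c => U c a) ⬝ᵥ (fun c => U c b)
      = (1 : Matrix (Fin d) (Fin d) ℂ) a b := by
    intro a b
    conv_rhs => rw [← hUU]
    simp [Matrix.mul_apply, Matrix.star_apply, dotProduct]
  -- the eigenvalues sum to 1
  have htrace : ∑ j, (ev j : ℂ) = 1 := by
    have h1 : σ.trace = ∑ j, (ev j : ℂ) := by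
      conv_lhs => rw [hH.spectral_theorem]
      rw [Unitary.conjStarAlgAut_apply]
      rw [← hUdef, Matrix.trace_mul_cycle, hUU, one_mul]
      simp [Matrix.trace_diagonal]
      rfl
    rw [← h1, htr]
  have htraceR : ∑ j, ev j = 1 := by
    have := htrace
    push_cast at this
    exact_mod_cast this
  -- a positive eigenvalue
  obtain ⟨i, hi⟩ : ∃ i, 0 < ev i := by
    by_contra hcon
    push_neg at hcon
    have hz : ∀ j, ev j = 0 := fun j => le_antisymm (hcon j) (hps.eigenvalues_nonneg j)
    rw [Finset.sum_congr rfl (fun j _ => hz j)] at htraceR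
    simp at htraceR
  -- a zero eigenvalue
  obtain ⟨k, hk⟩ : ∃ k, ev k = 0 := by
    by_contra hcon
    push_neg at hcon
    have hcard : σ.rank = d := by
      rw [hH.rank_eq_card_non_zero_eigs]
      rw [Fintype.card_congr (Equiv.subtypeUnivEquiv hcon)]
      simp
    omega
  have hik : i ≠ k := fun h => by rw [h, hk] at hi; exact lt_irrefl _ hi
  set u : Fin d → ℂ := fun c => U c i with hu
  set v : Fin d → ℂ := fun c => U c k with hv
  have hbu : ⇑(hH.eigenvectorBasis i) = u := by
    funext c
    simp [hu, hUdef, Matrix.IsHermitian.eigenvectorUnitary_apply]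
  have hbv : ⇑(hH.eigenvectorBasis k) = v := by
    funext c
    simp [hv, hUdef, Matrix.IsHermitian.eigenvectorUnitary_apply]
  have hσv : σ *ᵥ v = 0 := by
    have h := hH.mulVec_eigenvectorBasis k
    rw [hbv] at h
    rw [h, show hH.eigenvalues k = 0 from hk, zero_smul]
  have houu : star u ⬝ᵥ u = 1 := by rw [horth i i, Matrix.one_apply_eq]
  have houv : star u ⬝ᵥ v = 0 := by rw [horth i k, Matrix.one_apply_ne hik]
  have hovu : star v ⬝ᵥ u = 0 := by rw [horth k i, Matrix.one_apply_ne (Ne.symm hik)]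
  have hovv : star v ⬝ᵥ v = 1 := by rw [horth k k, Matrix.one_apply_eq]
  -- the square root of σ
  have hspec : σ = U * diagonal (RCLike.ofReal ∘ ev) * star U := by
    conv_lhs => rw [hH.spectral_theorem]
    rw [Unitary.conjStarAlgAut_apply]
  set s : Matrix (Fin d) (Fin d) ℂ :=
    U * diagonal (fun j => ((Real.sqrt (ev j) : ℝ) : ℂ)) * star U with hsdef
  have hs : matSqrt σ = s := by
    unfold matSqrt
    exact (dif_pos hps).trans rfl
  have hsH : s.IsHermitian := by
    rw [hsdef, Matrix.star_eq_conjTranspose]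
    exact (Matrix.PosSemidef.mul_mul_conjTranspose_same (Matrix.posSemidef_diagonal_iff.mpr
      fun j => Complex.zero_le_real.mpr (Real.sqrt_nonneg _)) U).1
  have hss : s * s = σ := by
    have hD : (fun j => ((Real.sqrt (ev j) : ℝ) : ℂ) * ((Real.sqrt (ev j) : ℝ) : ℂ))
        = RCLike.ofReal ∘ ev := by
      funext j
      show ((Real.sqrt (ev j) : ℝ) : ℂ) * ((Real.sqrt (ev j) : ℝ) : ℂ) = ((ev j : ℝ) : ℂ)
      rw [← Complex.ofReal_mul, Real.mul_self_sqrt (show 0 ≤ ev j from hps.eigenvalues_nonneg j)]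
    rw [hspec, hsdef]
    simp only [Matrix.mul_assoc]
    rw [← Matrix.mul_assoc (star U) U, hUU, Matrix.one_mul, ← Matrix.mul_assoc (diagonal _),
      diagonal_mul_diagonal, hD]
  have hsv : s *ᵥ v = 0 := by
    have h2 : star (s *ᵥ v) ⬝ᵥ (s *ᵥ v) = 0 := by
      rw [star_mulVec, hsH.eq, ← Matrix.dotProduct_mulVec, Matrix.mulVec_mulVec, hss, hσv]
      simp
    exact dotProduct_star_self_eq_zero.mp h2
  -- key: σ - l • u uᴴ is PSD
  set l : ℝ := ev i with hldef
  have hkey : σ - (l : ℂ) • vecMulVec u (star u)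
      = U * diagonal (fun j => if j = i then 0 else (ev j : ℂ)) * star U := by
    have hsub : U * diagonal (RCLike.ofReal ∘ ev) * star U
        - U * diagonal (fun j => if j = i then 0 else (ev j : ℂ)) * star U
        = (l : ℂ) • vecMulVec u (star u) := by
      rw [← sub_mul, ← Matrix.mul_sub, Matrix.diagonal_sub]
      ext a b
      rw [Matrix.mul_apply]
      simp only [Matrix.mul_diagonal, Matrix.star_apply, Matrix.smul_apply,
        vecMulVec_apply, smul_eq_mul]
      have hterm : ∀ c, U a c * ((RCLike.ofReal ∘ ev) c - if c = i then 0 else (ev c : ℂ))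
          * star (U b c) = if c = i then (l : ℂ) * (U a i * star (U b i)) else 0 := by
        intro c
        by_cases h : c = i
        · subst h
          simp [hldef, mul_comm, mul_assoc, mul_left_comm]
        · simp [h]
      rw [Finset.sum_congr rfl (fun c _ => hterm c), Finset.sum_ite_eq' Finset.univ i
        (fun _ => (l : ℂ) * (U a i * star (U b i)))]
      simp [hu]
    rw [← hspec] at hsub
    linear_combination (norm := module) hsub
  have hA0 : (σ - (l : ℂ) • vecMulVec u (star u)).PosSemidef := by
    rw [hkey, Matrix.star_eq_conjTranspose]
    refine Matrix.PosSemidef.mul_mul_conjTranspose_same ?_ U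
    refine Matrix.posSemidef_diagonal_iff.mpr fun j => ?_
    by_cases h : j = i
    · simp [h]
    · simp only [h, if_false]
      exact Complex.zero_le_real.mpr (hps.eigenvalues_nonneg j)
  -- the construction
  set c : ℝ := Real.sqrt l with hcdef
  have hc0 : c ≠ 0 := ne_of_gt (Real.sqrt_pos.mpr hi)
  have hcc : (c : ℂ) * (c : ℂ) = (l : ℂ) := by
    rw [← Complex.ofReal_mul, Real.mul_self_sqrt hi.le]
  set w : Fin d → ℂ := v + (c : ℂ) • u with hwdef
  have hstarw : star w = star v + (c : ℂ) • star u := by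
    rw [hwdef, star_add, star_smul]
    simp [Complex.star_def, Complex.conj_ofReal]
  have hwv : star w ⬝ᵥ v = 1 := by
    rw [hstarw, add_dotProduct, smul_dotProduct, hovv, houv, smul_zero, add_zero]
  have hww : star w ⬝ᵥ w = 1 + (l : ℂ) := by
    rw [hstarw]
    simp only [hstarw, hwdef, add_dotProduct, dotProduct_add, smul_dotProduct,
      dotProduct_smul, hovv, houv, hovu, houu, smul_eq_mul, mul_zero, mul_one,
      add_zero, zero_add]
    linear_combination hcc
  set A₀ : Matrix (Fin d) (Fin d) ℂ := σ - (l : ℂ) • vecMulVec u (star u) with hA₀def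
  set ρ₁ : Matrix (Fin d) (Fin d) ℂ :=
    (1/2 : ℝ) • σ + (1/2 : ℝ) • vecMulVec v (star v) with hρ₁def
  set ρ₂ : Matrix (Fin d) (Fin d) ℂ :=
    (1/2 : ℝ) • A₀ + (1/2 : ℝ) • vecMulVec w (star w) with hρ₂def
  have hρ₁psd : ρ₁.PosSemidef :=
    (posSemidef_real_smul' hps (by norm_num)).add
      (posSemidef_real_smul' (posSemidef_outer' v) (by norm_num))
  have hρ₂psd : ρ₂.PosSemidef :=
    (posSemidef_real_smul' hA0 (by norm_num)).add
      (posSemidef_real_smul' (posSemidef_outer' w) (by norm_num))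
  have hρ₁tr : ρ₁.trace = 1 := by
    rw [hρ₁def, Matrix.trace_add, Matrix.trace_smul, Matrix.trace_smul, htr,
      trace_vecMulVec', dotProduct_comm, hovv]
    norm_num [Complex.real_smul]
  have hρ₂tr : ρ₂.trace = 1 := by
    have hA₀tr : A₀.trace = 1 - (l : ℂ) := by
      rw [hA₀def, Matrix.trace_sub, Matrix.trace_smul, htr, trace_vecMulVec',
        dotProduct_comm, houu]
      simp
    rw [hρ₂def, Matrix.trace_add, Matrix.trace_smul, Matrix.trace_smul, hA₀tr,
      trace_vecMulVec', dotProduct_comm, hww]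
    rw [Complex.real_smul, Complex.real_smul]
    push_cast
    ring
  -- ρ₁ ≠ ρ₂
  have hne : ρ₁ ≠ ρ₂ := by
    intro heq
    have hv1 : ρ₁ *ᵥ v = (1/2 : ℝ) • v := by
      rw [hρ₁def, add_mulVec, smul_mulVec, smul_mulVec, hσv, smul_zero,
        vecMulVec_mulVec', hovv, one_smul, zero_add]
    have hv2 : ρ₂ *ᵥ v = (1/2 : ℝ) • w := by
      have hA₀v : A₀ *ᵥ v = 0 := by
        rw [hA₀def, sub_mulVec, hσv, smul_mulVec, vecMulVec_mulVec', houv,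
          zero_smul, smul_zero, zero_sub, neg_zero]
      rw [hρ₂def, add_mulVec, smul_mulVec, smul_mulVec, hA₀v, smul_zero,
        vecMulVec_mulVec', hwv, one_smul, zero_add]
    rw [heq, hv2] at hv1
    have hvw : w = v := smul_right_injective (Fin d → ℂ) (by norm_num : (1/2 : ℝ) ≠ 0) hv1
    rw [hwdef] at hvw
    have hcu : (c : ℂ) • u = 0 := by
      rwa [add_eq_left] at hvw
    rcases smul_eq_zero.mp hcu with h | h
    · exact hc0 (Complex.ofReal_eq_zero.mp h)
    · rw [h] at houu
      simp at houu
  -- sandwiching by s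
  have hvs : star v ᵥ* s = 0 := by
    have := star_mulVec (M := s) (v := v)
    rw [hsH.eq] at this
    rw [← this, hsv, star_zero]
  have houter0 : vecMulVec (s *ᵥ v) (star v ᵥ* s) = 0 := by
    rw [hsv]
    ext i j
    simp [vecMulVec_apply]
  have hs1 : s * ρ₁ * s = (1/2 : ℝ) • (s * σ * s) := by
    rw [hρ₁def, Matrix.mul_add, Matrix.add_mul, Matrix.mul_smul, Matrix.mul_smul,
      Matrix.smul_mul, Matrix.smul_mul, mul_vecMulVec', vecMulVec_mul', houter0,
      smul_zero, add_zero]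
  have hconj : s * vecMulVec w (star w) * s = (l : ℂ) • (s * vecMulVec u (star u) * s) := by
    have hsw : s *ᵥ w = (c : ℂ) • (s *ᵥ u) := by
      rw [hwdef, mulVec_add, mulVec_smul, hsv, zero_add]
    have hws : star w ᵥ* s = (c : ℂ) • (star u ᵥ* s) := by
      rw [hstarw, add_vecMul, smul_vecMul, hvs, zero_add]
    rw [mul_vecMulVec', vecMulVec_mul', hsw, hws, smul_vecMulVec_smul, hcc,
      mul_vecMulVec', vecMulVec_mul']
  have hs2 : s * ρ₂ * s = (1/2 : ℝ) • (s * σ * s) := by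
    rw [hρ₂def, Matrix.mul_add, Matrix.add_mul, Matrix.mul_smul, Matrix.mul_smul,
      Matrix.smul_mul, Matrix.smul_mul, hconj, hA₀def, Matrix.mul_sub, Matrix.sub_mul,
      Matrix.mul_smul, Matrix.smul_mul, smul_sub, sub_add_cancel]
  have hmid : s * ((1/2 : ℝ) • (ρ₁ + ρ₂)) * s = (1/2 : ℝ) • (s * σ * s) := by
    rw [Matrix.mul_smul, Matrix.smul_mul, Matrix.mul_add, Matrix.add_mul, hs1, hs2,
      ← add_smul]
    norm_num
  refine ⟨ρ₁, ρ₂, ⟨hρ₁psd, hρ₁tr⟩, ⟨hρ₂psd, hρ₂tr⟩, hne, ?_⟩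
  unfold fidelity
  rw [hs, hs1, hs2, hmid]
  ring
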